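/- arXiv:2210.16628 — 6 statements merged into one kernel-verified Lean document; each statement's English description precedes it below -/
import Mathlib

section
/- Let n ≥ 1 and let A be an n×n real matrix with positive diagonal entries (A_{ii} > 0 for all i) and nonpositive off-diagonal entries (A_{ij} ≤ 0 for all i ≠ j). Then A is a nonsingular M-matrix (i.e., A is invertible and every entry of A⁻¹ is nonnegative) if and only if there exists a vector d ∈ ℝⁿ with d_k > 0 for every k such that every entry of the vector A·d is positive (equivalently, there exists a positive diagonal matrix D such that A·D has all positive row sums). -/
/-!
A Z-matrix `A` (nonpositive off-diagonal entries) that maps some positive vector `d` to a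
positive vector is monotone: `A x ≥ 0` forces `x ≥ 0`. Indeed, at an index `m` minimising
`x m / d m =: s`, we have `x ≥ s • d` with equality at `m`, so the sign pattern of `A` gives
`(A x) m ≤ s (A d) m`, which is negative if `s < 0`. A monotone matrix has trivial kernel and
its inverse has nonnegative columns `A⁻¹ eⱼ`. Conversely, if `A⁻¹ ≥ 0` then `d = A⁻¹ 1` works:
no row of the invertible matrix `A⁻¹` vanishes, so every row sum is positive.
-/

open Matrix

namespace Matrix

variable {ι 𝕜 : Type*} [Fintype ι] [Field 𝕜] [LinearOrder 𝕜] [IsStrictOrderedRing 𝕜]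

/-- Monotone in the sense of Collatz, i.e. `A x ≤ A y → x ≤ y`; not `Monotone (A *ᵥ ·)`. -/
def IsMonotone (A : Matrix ι ι 𝕜) : Prop :=
  ∀ x : ι → 𝕜, 0 ≤ A *ᵥ x → 0 ≤ x

theorem IsMonotone.of_offDiag_nonpos {A : Matrix ι ι 𝕜} (hoff : ∀ i j, i ≠ j → A i j ≤ 0)
    {d : ι → 𝕜} (hd : ∀ k, 0 < d k) (hAd : ∀ i, 0 < (A *ᵥ d) i) : A.IsMonotone := by
  intro x hx i
  obtain ⟨m, -, hm⟩ := Finset.univ.exists_min_image (fun j => x j / d j) ⟨i, Finset.mem_univ i⟩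
  set s := x m / d m
  have hxs : ∀ j, s * d j ≤ x j := fun j => (le_div_iff₀ (hd j)).1 (hm j (Finset.mem_univ j))
  have hs : 0 ≤ s := by
    by_contra! hs
    have hle : (A *ᵥ x) m ≤ s * (A *ᵥ d) m := by
      simp only [mulVec, dotProduct, Finset.mul_sum]
      refine Finset.sum_le_sum fun j _ => ?_
      rcases eq_or_ne m j with rfl | hj
      · rw [mul_left_comm, div_mul_cancel₀ _ (hd m).ne']
      · linarith [mul_le_mul_of_nonpos_left (hxs j) (hoff m j hj)]
    linarith [show 0 ≤ (A *ᵥ x) m from hx m, mul_neg_of_neg_of_pos hs (hAd m)]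
  exact le_trans (mul_nonneg hs (hd i).le) (hxs i)

variable [DecidableEq ι]

theorem IsMonotone.isUnit {A : Matrix ι ι 𝕜} (hA : A.IsMonotone) : IsUnit A := by
  rw [isUnit_iff_isUnit_det, isUnit_iff_ne_zero, Ne, ← exists_mulVec_eq_zero_iff]
  rintro ⟨v, hv, hAv⟩
  have hpos : 0 ≤ v := hA v hAv.ge
  have hneg : 0 ≤ -v := hA (-v) (by rw [mulVec_neg, hAv, neg_zero])
  exact hv (le_antisymm (neg_nonneg.1 hneg) hpos)

theorem IsMonotone.inv_nonneg {A : Matrix ι ι 𝕜} (hA : A.IsMonotone) (i j : ι) :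
    0 ≤ A⁻¹ i j := by
  have hcol : A *ᵥ (A⁻¹ *ᵥ Pi.single j 1) = Pi.single j 1 := by
    rw [mulVec_mulVec, mul_nonsing_inv A ((isUnit_iff_isUnit_det A).1 hA.isUnit), one_mulVec]
  have := hA _ (hcol ▸ Pi.single_nonneg.2 zero_le_one) i
  rwa [mulVec_single_one] at this

theorem mulVec_one_pos_of_isUnit {B : Matrix ι ι 𝕜} (hB : IsUnit B) (hnonneg : ∀ i j, 0 ≤ B i j)
    (i : ι) : 0 < (B *ᵥ 1) i := by
  refine (Finset.sum_nonneg fun j _ => by simpa using hnonneg i j).lt_of_ne fun hsum => ?_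
  have hrow : ∀ j, B i j = 0 := fun j =>
    (Finset.sum_eq_zero_iff_of_nonneg fun j _ => by simpa using hnonneg i j).1
      (by simpa [mulVec, dotProduct] using hsum.symm) j (Finset.mem_univ j)
  exact ((isUnit_iff_isUnit_det B).1 hB).ne_zero (det_eq_zero_of_row_eq_zero i hrow)

end Matrix

theorem stmt_0_general {n : ℕ} (A : Matrix (Fin n) (Fin n) ℝ)
    (hoff : ∀ i j, i ≠ j → A i j ≤ 0) :
    (IsUnit A ∧ ∀ i j, 0 ≤ A⁻¹ i j) ↔
      ∃ d : Fin n → ℝ, (∀ k, 0 < d k) ∧ ∀ i, 0 < A.mulVec d i := by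
  constructor
  · rintro ⟨hA, hinv⟩
    have hAd : A *ᵥ (A⁻¹ *ᵥ 1) = 1 := by
      rw [mulVec_mulVec, mul_nonsing_inv A ((isUnit_iff_isUnit_det A).1 hA), one_mulVec]
    exact ⟨A⁻¹ *ᵥ 1, mulVec_one_pos_of_isUnit (isUnit_nonsing_inv_iff.2 hA) hinv,
      fun i => by simp [hAd]⟩
  · rintro ⟨d, hd, hAd⟩
    have hA : A.IsMonotone := .of_offDiag_nonpos hoff hd hAd
    exact ⟨hA.isUnit, hA.inv_nonneg⟩

/-- **M-matrix characterization.** Let `A` be an `n × n` real matrix (`n ≥ 1`) with positive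
diagonal entries and nonpositive off-diagonal entries. Then `A` is a nonsingular M-matrix
(invertible with entrywise nonnegative inverse) if and only if there exists a vector `d` with
all positive entries such that every entry of `A · d` is positive (equivalently, there is a
positive diagonal matrix `D` such that `A·D` has all positive row sums). -/
theorem stmt_0 {n : ℕ} (hn : 1 ≤ n) (A : Matrix (Fin n) (Fin n) ℝ)
    (hdiag : ∀ i, 0 < A i i)
    (hoff : ∀ i j, i ≠ j → A i j ≤ 0) :
    (IsUnit A ∧ ∀ i j, 0 ≤ A⁻¹ i j) ↔
      ∃ d : Fin n → ℝ, (∀ k, 0 < d k) ∧ ∀ i, 0 < A.mulVec d i :=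
  stmt_0_general A hoff
end

section
/- Lorenz's condition: Let A be an n×n real matrix with positive diagonal entries. Write A_d for the diagonal part of A, A_a^+ for the matrix whose (i,j) entry equals A_{ij} when i ≠ j and A_{ij} > 0 and equals 0 otherwise, and A_a^- = A − A_d − A_a^+. Suppose A_a^- admits a decomposition A_a^- = A^z + A^s with A^z ≤ 0 and A^s ≤ 0 entrywise such that: (1) A_d + A^z is a nonsingular M-matrix; (2) A_a^+ ≤ A^z A_d^{-1} A^s entrywise; (3) there exists e ∈ ℝⁿ with e ≥ 0 entrywise, e ≠ 0, and A·e ≥ 0 entrywise, such that A^z or A^s connects N⁰(Ae) with N⁺(Ae). Then A is the product of two nonsingular M-matrices; in particular, A is invertible and every entry of A⁻¹ is nonnegative. -/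
/-!
Put `M₁ = A_d + A^z` and `M₂ = M₁⁻¹ A`, so that `A = M₁ M₂`. Since `A = M₁ + A_a^+ + A^s` and
`M₁⁻¹ ≥ 0`, condition (2) gives `M₂ ≤ I + A_d⁻¹ A^s`; hence `M₂` is a Z-matrix, strictly negative
wherever `A^s` is nonzero off the diagonal, and `M₂ e = M₁⁻¹ (A e) ≥ 0`.

A Z-matrix `B` with some `x ≥ 0`, `B x ≥ 0` such that `B` connects `N⁰(Bx)` with `N⁺(Bx)` is
monotone (`B v ≥ 0 → v ≥ 0`), hence a nonsingular M-matrix: if `v/x` had a negative minimum, the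
indices attaining it would form a set inside `N⁰(Bx)` closed under the edges of `B`, which no
path can leave. We apply this to `B = M₂`, `x = e`. If `A^z` connects, positivity of the entries
of `M₁⁻¹` propagates along the paths of `A^z`, so `M₂ e > 0`; if `A^s` connects, `M₂` inherits
its paths.
-/

open Matrix BigOperators

/-- A nonsingular M-matrix: a real square matrix with nonpositive off-diagonal entries that is
invertible and whose inverse has all entries nonnegative. -/
def IsNonsingMMatrix {n : ℕ} (B : Matrix (Fin n) (Fin n) ℝ) : Prop :=
  (∀ i j, i ≠ j → B i j ≤ 0) ∧ IsUnit B ∧ ∀ i j, 0 ≤ B⁻¹ i j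

/-- The matrix `B` connects `N1` with `N2`: for every `i₀ ∈ N1` there is a directed path
`i₀ = p 0, p 1, …, p r` with `r ≥ 1`, `p r ∈ N2` and `B (p (k-1)) (p k) ≠ 0` for `k = 1,…,r`.
In particular, if `N1 = ∅` then any matrix connects `N1` and `N2`. -/
def Connects {n : ℕ} (B : Matrix (Fin n) (Fin n) ℝ) (N1 N2 : Set (Fin n)) : Prop :=
  ∀ i0 ∈ N1, ∃ r : ℕ, 1 ≤ r ∧ ∃ p : ℕ → Fin n, p 0 = i0 ∧ p r ∈ N2 ∧
    ∀ k, k < r → B (p k) (p (k + 1)) ≠ 0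

namespace Matrix

variable {ι : Type*} [Fintype ι]

def IsZMatrix (B : Matrix ι ι ℝ) : Prop := ∀ i j, i ≠ j → B i j ≤ 0

theorem mulVec_nonneg {N : Matrix ι ι ℝ} {y : ι → ℝ} (hN : ∀ i j, 0 ≤ N i j) (hy : 0 ≤ y) :
    0 ≤ N *ᵥ y :=
  fun i => Finset.sum_nonneg fun k _ => mul_nonneg (hN i k) (hy k)

theorem mulVec_apply_pos {N : Matrix ι ι ℝ} {y : ι → ℝ} (hN : ∀ i j, 0 ≤ N i j) (hy : 0 ≤ y)
    {i j : ι} (hNij : 0 < N i j) (hyj : 0 < y j) : 0 < (N *ᵥ y) i :=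
  (mul_pos hNij hyj).trans_le
    (Finset.single_le_sum (fun k _ => mul_nonneg (hN i k) (hy k)) (Finset.mem_univ j))

theorem IsZMatrix.mulVec_apply_eq_zero {B : Matrix ι ι ℝ} (hB : IsZMatrix B) {w : ι → ℝ}
    (hw : 0 ≤ w) {k : ι} (hk : w k = 0) (hBw : 0 ≤ (B *ᵥ w) k) :
    (B *ᵥ w) k = 0 ∧ ∀ j, B k j ≠ 0 → w j = 0 := by
  have hterm : ∀ j ∈ Finset.univ, B k j * w j ≤ 0 := by
    intro j _
    rcases eq_or_ne k j with rfl | hkj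
    · simp [hk]
    · exact mul_nonpos_of_nonpos_of_nonneg (hB k j hkj) (hw j)
  have hzero : (B *ᵥ w) k = 0 := le_antisymm (Finset.sum_nonpos hterm) hBw
  refine ⟨hzero, fun j hj => ?_⟩
  have := (Finset.sum_eq_zero_iff_of_nonpos hterm).1 hzero j (Finset.mem_univ j)
  exact (mul_eq_zero.1 this).resolve_left hj

section Inverse

variable [DecidableEq ι]

theorem inv_mul_add_add_le {M D P S : Matrix ι ι ℝ} (hM : IsUnit M)
    (hMinv : ∀ i j, 0 ≤ M⁻¹ i j) (hD : IsUnit D)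
    (hP : ∀ i j, P i j ≤ ((M - D) * D⁻¹ * S) i j) (i j : ι) :
    (M⁻¹ * (M + P + S)) i j ≤ (1 + D⁻¹ * S) i j := by
  have hMdet := (isUnit_iff_isUnit_det M).1 hM
  have hDdet := (isUnit_iff_isUnit_det D).1 hD
  have hbound : (M⁻¹ * P) i j ≤ (M⁻¹ * ((M - D) * D⁻¹ * S)) i j :=
    Finset.sum_le_sum fun k _ => mul_le_mul_of_nonneg_left (hP k j) (hMinv i k)
  have hexpand : M⁻¹ * ((M - D) * D⁻¹ * S) = D⁻¹ * S - M⁻¹ * S := by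
    rw [Matrix.sub_mul, Matrix.sub_mul, Matrix.mul_sub, Matrix.mul_assoc M, Matrix.mul_assoc D,
      Matrix.mul_nonsing_inv_cancel_left D _ hDdet, Matrix.nonsing_inv_mul_cancel_left M _ hMdet]
  rw [hexpand] at hbound
  rw [Matrix.mul_add, Matrix.mul_add, Matrix.nonsing_inv_mul _ hMdet]
  simp only [Matrix.add_apply, Matrix.sub_apply] at hbound ⊢
  linarith

theorem inv_diagonal_of_ne_zero {d : ι → ℝ} (hd : ∀ i, d i ≠ 0) :
    (diagonal d)⁻¹ = diagonal fun i => (d i)⁻¹ :=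
  Matrix.inv_eq_left_inv (by simp [diagonal_mul_diagonal, hd])

theorem inv_mul_apply_le_of_ne {A M P S : Matrix ι ι ℝ} {d : ι → ℝ} (hd : ∀ i, d i ≠ 0)
    (hM : IsUnit M) (hMinv : ∀ i j, 0 ≤ M⁻¹ i j)
    (hP : ∀ i j, P i j ≤ ((M - diagonal d) * (diagonal d)⁻¹ * S) i j) (hA : A = M + P + S)
    {i j : ι} (hij : i ≠ j) : (M⁻¹ * A) i j ≤ (d i)⁻¹ * S i j := by
  have hD : IsUnit (diagonal d) := isUnit_diagonal.2 (Pi.isUnit_iff.2 fun i => (hd i).isUnit)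
  simpa [inv_diagonal_of_ne_zero hd, one_apply_ne hij, hA] using
    inv_mul_add_add_le hM hMinv hD hP i j

end Inverse

end Matrix

section

variable {n : ℕ}

theorem Connects.mono {B C : Matrix (Fin n) (Fin n) ℝ} {N₁ N₂ N₁' N₂' : Set (Fin n)}
    (h : Connects B N₁ N₂) (hN₁ : N₁' ⊆ N₁) (hN₂ : N₂ ⊆ N₂')
    (hBC : ∀ i j, B i j ≠ 0 → C i j ≠ 0) : Connects C N₁' N₂' := by
  intro i hi
  obtain ⟨r, hr, p, hp0, hpr, hp⟩ := h i (hN₁ hi)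
  exact ⟨r, hr, p, hp0, hN₂ hpr, fun k hk => hBC _ _ (hp k hk)⟩

theorem Connects.eq_empty_of_closed {B : Matrix (Fin n) (Fin n) ℝ} {y : Fin n → ℝ}
    {K : Set (Fin n)} (hB : Connects B {i | y i = 0} {i | 0 < y i}) (hKy : ∀ k ∈ K, y k = 0)
    (hK : ∀ k ∈ K, ∀ j, B k j ≠ 0 → j ∈ K) : K = ∅ := by
  refine Set.eq_empty_iff_forall_notMem.2 fun k hk => ?_
  obtain ⟨r, -, p, hp0, hpr, hp⟩ := hB k (hKy k hk)
  have hpK : ∀ m ≤ r, p m ∈ K := by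
    intro m
    induction m with
    | zero => exact fun _ => hp0 ▸ hk
    | succ m ih => exact fun hm => hK _ (ih (by omega)) _ (hp m (by omega))
  exact hpr.ne' (hKy _ (hpK r le_rfl))

namespace Matrix.IsZMatrix

variable {B : Matrix (Fin n) (Fin n) ℝ} {x : Fin n → ℝ}

theorem pos_of_connects (hB : IsZMatrix B) (hx : 0 ≤ x) (hBx : 0 ≤ B *ᵥ x)
    (hconn : Connects B {i | (B *ᵥ x) i = 0} {i | 0 < (B *ᵥ x) i}) (i : Fin n) : 0 < x i := by
  refine (hx i).lt_of_ne' fun hi => ?_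
  have hK := Connects.eq_empty_of_closed hconn (K := {k | x k = 0})
    (fun k hk => (hB.mulVec_apply_eq_zero hx hk (hBx k)).1)
    (fun k hk => (hB.mulVec_apply_eq_zero hx hk (hBx k)).2)
  exact Set.eq_empty_iff_forall_notMem.1 hK i hi

theorem nonneg_of_mulVec_nonneg (hB : IsZMatrix B) (hx : 0 ≤ x) (hBx : 0 ≤ B *ᵥ x)
    (hconn : Connects B {i | (B *ᵥ x) i = 0} {i | 0 < (B *ᵥ x) i}) {v : Fin n → ℝ}
    (hv : 0 ≤ B *ᵥ v) : 0 ≤ v := by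
  have hxpos := hB.pos_of_connects hx hBx hconn
  by_contra hneg
  obtain ⟨i₀, hi₀⟩ : ∃ i, v i < 0 := by simpa [Pi.le_def] using hneg
  obtain ⟨k, -, hk⟩ :=
    Finset.univ.exists_min_image (fun i => v i / x i) ⟨i₀, Finset.mem_univ _⟩
  set m := v k / x k
  have hm : m < 0 := (hk i₀ (Finset.mem_univ _)).trans_lt (div_neg_of_neg_of_pos hi₀ (hxpos i₀))
  set w := v - m • x
  have hw : 0 ≤ w := fun i => by
    have := (le_div_iff₀ (hxpos i)).1 (hk i (Finset.mem_univ _))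
    simp only [w, Pi.sub_apply, Pi.smul_apply, smul_eq_mul, Pi.zero_apply]
    linarith
  have hclosed : ∀ i, w i = 0 → (B *ᵥ x) i = 0 ∧ ∀ j, B i j ≠ 0 → w j = 0 := by
    intro i hi
    have hBw : (B *ᵥ w) i = (B *ᵥ v) i - m * (B *ᵥ x) i := by
      simp [w, mulVec_sub, mulVec_smul]
    have hvi : 0 ≤ (B *ᵥ v) i := hv i
    have hxi : 0 ≤ (B *ᵥ x) i := hBx i
    obtain ⟨h0, hj⟩ := hB.mulVec_apply_eq_zero hw hi (by nlinarith)
    exact ⟨by nlinarith, hj⟩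
  have hK := Connects.eq_empty_of_closed hconn (K := {i | w i = 0})
    (fun i hi => (hclosed i hi).1) (fun i hi => (hclosed i hi).2)
  refine Set.eq_empty_iff_forall_notMem.1 hK k ?_
  simp [w, m, div_mul_cancel₀ _ (hxpos k).ne']

theorem isNonsingMMatrix_of_monotone (hB : IsZMatrix B) (hmono : ∀ v, 0 ≤ B *ᵥ v → 0 ≤ v) :
    IsNonsingMMatrix B := by
  have hunit : IsUnit B := by
    refine mulVec_injective_iff_isUnit.1 fun u v huv => ?_
    have hsub : B *ᵥ (u - v) = 0 := by rw [mulVec_sub, huv, sub_self]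
    have h₁ := hmono (u - v) hsub.ge
    have h₂ := hmono (v - u) (by rw [← neg_sub, mulVec_neg, hsub, neg_zero])
    exact le_antisymm (sub_nonneg.1 h₂) (sub_nonneg.1 h₁)
  refine ⟨hB, hunit, fun i j => ?_⟩
  have hcol : B *ᵥ (B⁻¹ *ᵥ Pi.single j 1) = Pi.single j 1 := by
    rw [mulVec_mulVec, mul_nonsing_inv _ ((isUnit_iff_isUnit_det B).1 hunit),
      one_mulVec]
  have := hmono _ (hcol ▸ Pi.single_nonneg.2 zero_le_one) i
  rwa [mulVec_single_one] at this

theorem isNonsingMMatrix_of_connects (hB : IsZMatrix B) (hx : 0 ≤ x)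
    (hBx : 0 ≤ B *ᵥ x) (hconn : Connects B {i | (B *ᵥ x) i = 0} {i | 0 < (B *ᵥ x) i}) :
    IsNonsingMMatrix B :=
  hB.isNonsingMMatrix_of_monotone fun _ => hB.nonneg_of_mulVec_nonneg hx hBx hconn

end Matrix.IsZMatrix

namespace IsNonsingMMatrix

variable {M : Matrix (Fin n) (Fin n) ℝ}

theorem inv_apply_mul_apply_nonpos (hM : IsNonsingMMatrix M) {i j k : Fin n} (hkj : k ≠ j) :
    M⁻¹ i k * M k j ≤ 0 :=
  mul_nonpos_of_nonneg_of_nonpos (hM.2.2 i k) (hM.1 k j hkj)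

theorem inv_apply_pos_of_sum_lt (hM : IsNonsingMMatrix M) {i j : Fin n}
    (h : ∑ k ∈ Finset.univ.erase j, M⁻¹ i k * M k j < (1 : Matrix (Fin n) (Fin n) ℝ) i j) :
    0 < M⁻¹ i j := by
  have hinv := congr_fun₂ (nonsing_inv_mul M ((isUnit_iff_isUnit_det M).1 hM.2.1)) i j
  rw [mul_apply, ← Finset.add_sum_erase _ _ (Finset.mem_univ j)] at hinv
  refine (hM.2.2 i j).lt_of_ne' fun h0 => ?_
  rw [h0, zero_mul, zero_add] at hinv
  exact h.ne hinv

theorem inv_apply_self_pos (hM : IsNonsingMMatrix M) (i : Fin n) : 0 < M⁻¹ i i :=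
  hM.inv_apply_pos_of_sum_lt <| by
    rw [one_apply_eq]
    exact (Finset.sum_nonpos fun k hk => hM.inv_apply_mul_apply_nonpos
      (Finset.ne_of_mem_erase hk)).trans_lt one_pos

theorem inv_apply_pos_of_pos (hM : IsNonsingMMatrix M) {i l j : Fin n} (hil : 0 < M⁻¹ i l)
    (hlj : l ≠ j) (hMlj : M l j ≠ 0) : 0 < M⁻¹ i j := by
  rcases eq_or_ne i j with rfl | hij
  · exact hM.inv_apply_self_pos i
  refine hM.inv_apply_pos_of_sum_lt ?_
  rw [one_apply_ne hij, ← Finset.add_sum_erase _ _ (Finset.mem_erase.2 ⟨hlj, Finset.mem_univ l⟩)]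
  have hl : M⁻¹ i l * M l j < 0 := mul_neg_of_pos_of_neg hil ((hM.1 l j hlj).lt_of_ne hMlj)
  have hrest : ∑ k ∈ (Finset.univ.erase j).erase l, M⁻¹ i k * M k j ≤ 0 :=
    Finset.sum_nonpos fun k hk =>
      hM.inv_apply_mul_apply_nonpos (Finset.ne_of_mem_erase (Finset.mem_of_mem_erase hk))
  linarith

theorem inv_apply_pos_of_path (hM : IsNonsingMMatrix M) {r : ℕ} {p : ℕ → Fin n}
    (hp : ∀ k < r, p k ≠ p (k + 1) → M (p k) (p (k + 1)) ≠ 0) : 0 < M⁻¹ (p 0) (p r) := by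
  induction r with
  | zero => exact hM.inv_apply_self_pos _
  | succ r ih =>
    have hr := ih fun k hk => hp k (by omega)
    by_cases hstep : p r = p (r + 1)
    · rwa [← hstep]
    · exact hM.inv_apply_pos_of_pos hr hstep (hp r (by omega) hstep)

theorem inv_mulVec_pos_of_connects (hM : IsNonsingMMatrix M) {B : Matrix (Fin n) (Fin n) ℝ}
    (hBM : ∀ i j, i ≠ j → B i j ≠ 0 → M i j ≠ 0) {y : Fin n → ℝ} (hy : 0 ≤ y)
    (hconn : Connects B {i | y i = 0} {i | 0 < y i}) (i : Fin n) : 0 < (M⁻¹ *ᵥ y) i := by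
  rcases (hy i).lt_or_eq with hi | hi
  · exact mulVec_apply_pos hM.2.2 hy (hM.inv_apply_self_pos i) hi
  · obtain ⟨r, -, p, rfl, hpr, hp⟩ := hconn i hi.symm
    exact mulVec_apply_pos hM.2.2 hy
      (hM.inv_apply_pos_of_path fun k hk hne => hBM _ _ hne (hp k hk)) hpr

theorem connects_inv_mulVec (hM : IsNonsingMMatrix M) {B C : Matrix (Fin n) (Fin n) ℝ}
    (hBC : ∀ i j, B i j ≠ 0 → C i j ≠ 0) {y : Fin n → ℝ} (hy : 0 ≤ y)
    (hconn : Connects B {i | y i = 0} {i | 0 < y i}) :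
    Connects C {i | (M⁻¹ *ᵥ y) i = 0} {i | 0 < (M⁻¹ *ᵥ y) i} := by
  refine Connects.mono hconn (fun i hi => ?_) (fun i hi => ?_) hBC
  · by_contra hne
    exact (mulVec_apply_pos hM.2.2 hy (hM.inv_apply_self_pos i)
      ((hy i).lt_of_ne' hne)).ne' hi
  · exact mulVec_apply_pos hM.2.2 hy (hM.inv_apply_self_pos i) hi

theorem mul_inv_apply_nonneg {M₁ M₂ : Matrix (Fin n) (Fin n) ℝ} (h₁ : IsNonsingMMatrix M₁)
    (h₂ : IsNonsingMMatrix M₂) (i j : Fin n) : 0 ≤ (M₁ * M₂)⁻¹ i j := by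
  rw [Matrix.mul_inv_rev, mul_apply]
  exact Finset.sum_nonneg fun k _ => mul_nonneg (h₂.2.2 i k) (h₁.2.2 k j)

theorem isNonsingMMatrix_inv_mul (hM : IsNonsingMMatrix M) {A : Matrix (Fin n) (Fin n) ℝ}
    (hZ : (M⁻¹ * A).IsZMatrix) {e : Fin n → ℝ} (he : 0 ≤ e) (hAe : 0 ≤ A *ᵥ e)
    {B S : Matrix (Fin n) (Fin n) ℝ} (hB : ∀ i j, i ≠ j → B i j ≠ 0 → M i j ≠ 0)
    (hS : ∀ i j, S i j ≠ 0 → (M⁻¹ * A) i j ≠ 0)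
    (hconn : Connects B {i | (A *ᵥ e) i = 0} {i | 0 < (A *ᵥ e) i} ∨
      Connects S {i | (A *ᵥ e) i = 0} {i | 0 < (A *ᵥ e) i}) :
    IsNonsingMMatrix (M⁻¹ * A) := by
  have hMe : (M⁻¹ * A) *ᵥ e = M⁻¹ *ᵥ (A *ᵥ e) := (mulVec_mulVec _ _ _).symm
  refine hZ.isNonsingMMatrix_of_connects he (hMe ▸ mulVec_nonneg hM.2.2 hAe) ?_
  rw [hMe]
  rcases hconn with hB_conn | hS_conn
  · exact fun i hi => absurd hi (hM.inv_mulVec_pos_of_connects hB hAe hB_conn i).ne'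
  · exact hM.connects_inv_mulVec hS hAe hS_conn

end IsNonsingMMatrix

end

/-- **Lorenz's condition.** Let `A` be an `n × n` real matrix with positive diagonal entries,
`Ad` its diagonal part, `Aap` its positive off-diagonal part, and `Aam = A - Ad - Aap` its
nonpositive off-diagonal part. Suppose `Aam = Az + As` with `Az ≤ 0`, `As ≤ 0` entrywise, where
(1) `Ad + Az` is a nonsingular M-matrix, (2) `Aap ≤ Az · Ad⁻¹ · As` entrywise, and
(3) there exists `e ≥ 0`, `e ≠ 0`, with `A·e ≥ 0` entrywise such that `Az` or `As` connects
`N⁰(Ae)` with `N⁺(Ae)`. Then `A` is the product of two nonsingular M-matrices; in particular,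
`A` is invertible and every entry of `A⁻¹` is nonnegative. -/
theorem stmt_1 {n : ℕ} (A : Matrix (Fin n) (Fin n) ℝ)
    (hdiag : ∀ i, 0 < A i i)
    (Ad Aap Aam Az As : Matrix (Fin n) (Fin n) ℝ)
    (hAd : Ad = Matrix.diagonal fun i => A i i)
    (hAap : ∀ i j, Aap i j = if i ≠ j ∧ 0 < A i j then A i j else 0)
    (hAam : Aam = A - Ad - Aap)
    (hdecomp : Aam = Az + As)
    (hAz : ∀ i j, Az i j ≤ 0) (hAs : ∀ i j, As i j ≤ 0)
    (h1 : IsNonsingMMatrix (Ad + Az))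
    (h2 : ∀ i j, Aap i j ≤ (Az * Ad⁻¹ * As) i j)
    (h3 : ∃ e : Fin n → ℝ, e ≠ 0 ∧ (∀ i, 0 ≤ e i) ∧ (∀ i, 0 ≤ A.mulVec e i) ∧
      (Connects Az {i | A.mulVec e i = 0} {i | 0 < A.mulVec e i} ∨
       Connects As {i | A.mulVec e i = 0} {i | 0 < A.mulVec e i})) :
    (∃ M1 M2 : Matrix (Fin n) (Fin n) ℝ,
        IsNonsingMMatrix M1 ∧ IsNonsingMMatrix M2 ∧ A = M1 * M2) ∧
      IsUnit A ∧ ∀ i j, 0 ≤ A⁻¹ i j := by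
  subst hAam
  obtain ⟨e, -, he, hAe, hconn⟩ := h3
  have hA : A = Ad + Az + Aap + As := by
    rw [add_assoc, add_assoc, add_left_comm Az, ← hdecomp]
    abel
  have hAs_diag : ∀ i, As i i = 0 := fun i => by
    have h := congr_fun₂ hdecomp i i
    simp only [Matrix.sub_apply, Matrix.add_apply, hAd, diagonal_apply_eq, hAap, ne_eq,
      not_true_eq_false, false_and, if_false] at h
    linarith [hAz i i, hAs i i]
  have hM₂_off : ∀ i j, i ≠ j → ((Ad + Az)⁻¹ * A) i j ≤ (A i i)⁻¹ * As i j := fun i j =>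
    inv_mul_apply_le_of_ne (fun i => (hdiag i).ne') h1.2.1 h1.2.2
      (by simpa only [← hAd, add_sub_cancel_left] using h2) hA
  have hM₂ : IsNonsingMMatrix ((Ad + Az)⁻¹ * A) := by
    refine h1.isNonsingMMatrix_inv_mul (fun i j hij => (hM₂_off i j hij).trans
        (mul_nonpos_of_nonneg_of_nonpos (inv_nonneg.2 (hdiag i).le) (hAs i j))) he hAe
      (fun i j hij h => by simpa [hAd, diagonal_apply_ne _ hij] using h) (fun i j h => ?_) hconn
    have hij : i ≠ j := by
      rintro rfl
      exact h (hAs_diag i)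
    exact ((hM₂_off i j hij).trans_lt
      (mul_neg_of_pos_of_neg (inv_pos.2 (hdiag i)) ((hAs i j).lt_of_ne h))).ne
  have hfactor : A = (Ad + Az) * ((Ad + Az)⁻¹ * A) :=
    (mul_nonsing_inv_cancel_left _ _ ((isUnit_iff_isUnit_det _).1 h1.2.1)).symm
  exact ⟨⟨_, _, h1, hM₂, hfactor⟩, hfactor ▸ h1.2.1.mul hM₂.2.1,
    hfactor ▸ h1.mul_inv_apply_nonneg hM₂⟩
end

section
/- Discrete energy dissipation: Let n ≥ 1, let W = diag(ω₁,…,ω_n) and M = diag(m₁,…,m_n) be diagonal n×n real matrices with ω_i > 0 and m_i > 0 for all i, and let A be an invertible n×n real matrix such that every entry of A⁻¹ is nonnegative, 1ᵀA = 1ᵀWM, and A·1 = WM·1, where 1 is the all-ones vector. Let f : ℝ → ℝ be a convex function. Then for every g ∈ ℝⁿ, setting g' = A⁻¹WMg, one has ∑_{i=1}^n ω_i m_i f(g'_i) ≤ ∑_{i=1}^n ω_i m_i f(g_i). In particular, the discrete energy E(g) = ∑_i ω_i m_i f(g_i) is non-increasing under one step of the fully discrete scheme. -/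
/-!
Put `d i = ω i * m i` and `B = A⁻¹ * diag d`, so that one step of the scheme is `g ↦ B *ᵥ g`.
Monotonicity makes `B` entrywise nonnegative, `A *ᵥ 1 = d` makes its rows sum to one, and
`1 ᵥ* A = d` makes `d` invariant, `d ᵥ* B = d`. Jensen's inequality in each row of this
Markov matrix, summed against `d`, then gives
`∑ d i * f ((B *ᵥ g) i) ≤ d ⬝ᵥ (B *ᵥ (f ∘ g)) = d ⬝ᵥ (f ∘ g)`.
-/

open Matrix BigOperators

section Markov

variable {ι : Type*} [Fintype ι]

theorem ConvexOn.map_mulVec_le {s : Set ℝ} {f : ℝ → ℝ} (hf : ConvexOn ℝ s f)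
    {B : Matrix ι ι ℝ} (hB : ∀ i j, 0 ≤ B i j) (hB1 : B *ᵥ 1 = 1)
    {g : ι → ℝ} (hg : ∀ j, g j ∈ s) (i : ι) :
    f ((B *ᵥ g) i) ≤ (B *ᵥ (f ∘ g)) i := by
  have hrow : ∑ j, B i j = 1 := by simpa [mulVec, dotProduct] using congrFun hB1 i
  simpa [mulVec, dotProduct] using
    hf.map_sum_le (fun j _ => hB i j) hrow (fun j _ => hg j)

theorem ConvexOn.sum_mul_map_mulVec_le {s : Set ℝ} {f : ℝ → ℝ} (hf : ConvexOn ℝ s f)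
    {B : Matrix ι ι ℝ} (hB : ∀ i j, 0 ≤ B i j) (hB1 : B *ᵥ 1 = 1)
    {d : ι → ℝ} (hd : ∀ i, 0 ≤ d i) (hdB : d ᵥ* B = d)
    {g : ι → ℝ} (hg : ∀ j, g j ∈ s) :
    ∑ i, d i * f ((B *ᵥ g) i) ≤ ∑ i, d i * f (g i) :=
  calc ∑ i, d i * f ((B *ᵥ g) i)
      ≤ d ⬝ᵥ (B *ᵥ (f ∘ g)) :=
        Finset.sum_le_sum fun i _ =>
          mul_le_mul_of_nonneg_left (hf.map_mulVec_le hB hB1 hg i) (hd i)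
    _ = (d ᵥ* B) ⬝ᵥ (f ∘ g) := dotProduct_mulVec d B (f ∘ g)
    _ = ∑ i, d i * f (g i) := by rw [hdB]; rfl

end Markov

section Scheme

variable {ι : Type*} [Fintype ι] [DecidableEq ι] {A P : Matrix ι ι ℝ}

theorem inv_mul_mulVec_one_of_mulVec_one_eq (hA : IsUnit A) (h : A *ᵥ 1 = P *ᵥ 1) :
    (A⁻¹ * P) *ᵥ 1 = 1 := by
  rw [← mulVec_mulVec, ← h, mulVec_mulVec, nonsing_inv_mul A ((isUnit_iff_isUnit_det A).mp hA),
    one_mulVec]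

theorem vecMul_inv_mul_of_one_vecMul_eq (hA : IsUnit A) (h : 1 ᵥ* A = 1 ᵥ* P) :
    (1 ᵥ* P) ᵥ* (A⁻¹ * P) = 1 ᵥ* P := by
  rw [← vecMul_vecMul]
  nth_rewrite 1 [← h]
  rw [vecMul_vecMul _ A, mul_nonsing_inv A ((isUnit_iff_isUnit_det A).mp hA), vecMul_one]

end Scheme

theorem stmt_4_general {n : ℕ} (ω m : Fin n → ℝ)
    (hω : ∀ i, 0 < ω i) (hm : ∀ i, 0 < m i)
    (A : Matrix (Fin n) (Fin n) ℝ) (hA : IsUnit A)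
    (hinv : ∀ i j, 0 ≤ A⁻¹ i j)
    (hrow : Matrix.vecMul (fun _ => (1 : ℝ)) A =
      Matrix.vecMul (fun _ => (1 : ℝ)) (Matrix.diagonal ω * Matrix.diagonal m))
    (hcol : A.mulVec (fun _ => (1 : ℝ)) =
      (Matrix.diagonal ω * Matrix.diagonal m).mulVec (fun _ => (1 : ℝ)))
    (f : ℝ → ℝ) (hf : ConvexOn ℝ Set.univ f)
    (g : Fin n → ℝ) :
    ∑ i, ω i * m i *
        f ((A⁻¹.mulVec ((Matrix.diagonal ω * Matrix.diagonal m).mulVec g)) i)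
      ≤ ∑ i, ω i * m i * f (g i) := by
  set P := diagonal ω * diagonal m
  have hP : P = diagonal (ω * m) := diagonal_mul_diagonal ω m
  have hd : 1 ᵥ* P = ω * m := funext fun i => by simp [hP, vecMul_diagonal]
  have hB : ∀ i j, 0 ≤ (A⁻¹ * P) i j := fun i j => by
    rw [hP, mul_diagonal]
    exact mul_nonneg (hinv i j) (mul_pos (hω j) (hm j)).le
  have hdB : (ω * m) ᵥ* (A⁻¹ * P) = ω * m := hd ▸ vecMul_inv_mul_of_one_vecMul_eq hA hrow
  rw [mulVec_mulVec]
  exact hf.sum_mul_map_mulVec_le hB (inv_mul_mulVec_one_of_mulVec_one_eq hA hcol)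
    (fun i => (mul_pos (hω i) (hm i)).le) hdB fun _ => Set.mem_univ _

/-- **Discrete energy dissipation.** With `W = diag(ω)`, `M = diag(m)` (positive diagonals),
`A` invertible with entrywise nonnegative inverse (monotone scheme), `1ᵀA = 1ᵀWM` and
`A·1 = WM·1`, for every convex `f : ℝ → ℝ` and every `g`, the step `g' = A⁻¹WMg` dissipates
the discrete energy: `∑ ω_i m_i f(g'_i) ≤ ∑ ω_i m_i f(g_i)`. -/
theorem stmt_4 {n : ℕ} (hn : 1 ≤ n) (ω m : Fin n → ℝ)
    (hω : ∀ i, 0 < ω i) (hm : ∀ i, 0 < m i)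
    (A : Matrix (Fin n) (Fin n) ℝ) (hA : IsUnit A)
    (hinv : ∀ i j, 0 ≤ A⁻¹ i j)
    (hrow : Matrix.vecMul (fun _ => (1 : ℝ)) A =
      Matrix.vecMul (fun _ => (1 : ℝ)) (Matrix.diagonal ω * Matrix.diagonal m))
    (hcol : A.mulVec (fun _ => (1 : ℝ)) =
      (Matrix.diagonal ω * Matrix.diagonal m).mulVec (fun _ => (1 : ℝ)))
    (f : ℝ → ℝ) (hf : ConvexOn ℝ Set.univ f)
    (g : Fin n → ℝ) :
    ∑ i, ω i * m i *
        f ((A⁻¹.mulVec ((Matrix.diagonal ω * Matrix.diagonal m).mulVec g)) i)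
      ≤ ∑ i, ω i * m i * f (g i) :=
  stmt_4_general ω m hω hm A hA hinv hrow hcol f hf g
end

section
/- Monotonicity of the second order scheme in one dimension: Let N ≥ 3, h > 0, Δt > 0, D > 0. Let M₁,…,M_N be positive reals and u₁,…,u_N reals with u₁ = u_N = 0. Adopt the ghost conventions M₀ := M₂, M_{N+1} := M_{N−1}, u₀ := −u₂, u_{N+1} := −u_{N−1}. Define the N×N real matrix A by the linear map (Ag)_i = M_i g_i + Δt·(u_{i−1}ĝ_{i−1} − u_{i+1}ĝ_{i+1})/(2h) + Δt·D·[−(M_{i−1}+M_i)ĝ_{i−1} + (M_{i−1}+2M_i+M_{i+1})g_i − (M_i+M_{i+1})ĝ_{i+1}]/(2h²) for i = 1,…,N, where ĝ_j = g_j for 1 ≤ j ≤ N and the folded ghost values are ĝ₀ := g₂ and ĝ_{N+1} := g_{N−1}. Assume (i) h·|u_j| ≤ D·min{M_{j−1}, M_j, M_{j+1}} for all j = 1,…,N (using the ghost conventions), and (ii) M_i + Δt·(u_{i−1} − u_{i+1})/(2h) > 0 for all i = 1,…,N (using the ghost conventions). Then A is a nonsingular M-matrix; in particular A is invertible and every entry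 of A⁻¹ is nonnegative. -/
/-!
The mesh condition makes both neighbour weights of every row nonnegative, so `A` has nonpositive
off-diagonal entries, and the time step condition says precisely that every row sum of `A` is
positive. Such a matrix obeys a discrete minimum principle: if `A x ≥ 0` then `x ≥ 0`, since at a
minimum `m` of `x` one has `(A x)_m ≤ (A 1)_m x_m`. Applied to `±x` with `A x = 0` this gives
invertibility, and applied to the columns of `A⁻¹` (whose images are the unit vectors) it gives
`A⁻¹ ≥ 0`.
-/

open Matrix

/-- Folding of grid indices `0, 1, …, N+1` (1-based) onto `Fin N` (0-based), implementing the
ghost conventions `ĝ₀ := g₂` and `ĝ_{N+1} := g_{N−1}`: an in-range index `1 ≤ j ≤ N` is sent to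
`j - 1 : Fin N`, the ghost index `0` is sent to `1 : Fin N` (i.e. `g₂`) and the ghost index
`N+1` is sent to `N - 2 : Fin N` (i.e. `g_{N−1}`). -/
def foldIdx1D (N : ℕ) (hN : 3 ≤ N) (j : ℕ) : Fin N :=
  if h : 1 ≤ j ∧ j ≤ N then ⟨j - 1, by omega⟩
  else if j = 0 then ⟨1, by omega⟩
  else ⟨N - 2, by omega⟩

namespace Matrix

variable {ι R : Type*} [Fintype ι]

section OrderedRing

variable [Ring R] [LinearOrder R] [IsStrictOrderedRing R]

theorem offDiag_nonpos_of_mulVec_apply_eq [DecidableEq ι] (A : Matrix ι ι R) {i p q : ι}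
    {d l r : R} (hl : 0 ≤ l) (hr : 0 ≤ r)
    (hA : ∀ g, (A *ᵥ g) i = d * g i - l * g p - r * g q) {j : ι} (hij : i ≠ j) :
    A i j ≤ 0 := by
  have hrow := hA (Pi.single j 1)
  rw [mulVec_single_one, col_apply, Pi.single_eq_of_ne hij, mul_zero, zero_sub] at hrow
  have he : 0 ≤ (Pi.single j 1 : ι → R) := Pi.single_nonneg.2 zero_le_one
  rw [hrow, sub_nonpos]
  exact (neg_nonpos.2 (mul_nonneg hl (he p))).trans (mul_nonneg hr (he q))

theorem nonneg_of_mulVec_nonneg {A : Matrix ι ι R} (hoff : ∀ i j, i ≠ j → A i j ≤ 0)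
    (hrow : ∀ i, 0 < (A *ᵥ fun _ => 1) i) {x : ι → R} (hx : 0 ≤ A *ᵥ x) : 0 ≤ x := by
  by_contra hneg
  obtain ⟨k, hk⟩ : ∃ k, x k < 0 := by simpa [Pi.le_def] using hneg
  obtain ⟨m, -, hmin⟩ := Finset.exists_min_image Finset.univ x ⟨k, Finset.mem_univ k⟩
  have hxm : x m < 0 := (hmin k (Finset.mem_univ k)).trans_lt hk
  have hle : (A *ᵥ x) m ≤ (A *ᵥ fun _ => 1) m * x m := by
    simp only [mulVec, dotProduct, mul_one, Finset.sum_mul]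
    refine Finset.sum_le_sum fun j _ => ?_
    rcases eq_or_ne m j with rfl | hmj
    · rfl
    · exact mul_le_mul_of_nonpos_left (hmin j (Finset.mem_univ j)) (hoff m j hmj)
  exact (hx m).not_gt (hle.trans_lt (mul_neg_of_pos_of_neg (hrow m) hxm))

end OrderedRing

section OrderedField

variable [DecidableEq ι] [Field R] [LinearOrder R] [IsStrictOrderedRing R] {A : Matrix ι ι R}

theorem isUnit_of_offDiag_nonpos_of_rowSum_pos (hoff : ∀ i j, i ≠ j → A i j ≤ 0)
    (hrow : ∀ i, 0 < (A *ᵥ fun _ => 1) i) : IsUnit A := by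
  refine mulVec_injective_iff_isUnit.1 fun x y hxy => ?_
  have hsub : A *ᵥ (x - y) = 0 := by rw [mulVec_sub, hxy, sub_self]
  have h₁ := nonneg_of_mulVec_nonneg hoff hrow hsub.ge
  have h₂ := nonneg_of_mulVec_nonneg hoff hrow (x := y - x)
    (by rw [← neg_sub, mulVec_neg, hsub, neg_zero])
  exact le_antisymm (sub_nonneg.1 h₂) (sub_nonneg.1 h₁)

theorem inv_nonneg_of_offDiag_nonpos_of_rowSum_pos (hoff : ∀ i j, i ≠ j → A i j ≤ 0)
    (hrow : ∀ i, 0 < (A *ᵥ fun _ => 1) i) (i j : ι) : 0 ≤ A⁻¹ i j := by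
  have hdet := (isUnit_iff_isUnit_det A).1 (isUnit_of_offDiag_nonpos_of_rowSum_pos hoff hrow)
  have hcol : A *ᵥ (A⁻¹ *ᵥ Pi.single j 1) = Pi.single j 1 := by
    rw [mulVec_mulVec, mul_nonsing_inv A hdet, one_mulVec]
  have := nonneg_of_mulVec_nonneg hoff hrow (hcol ▸ Pi.single_nonneg.2 zero_le_one)
  simpa [mulVec_single_one] using this i

end OrderedField

end Matrix

section Scheme

variable (h Δt D : ℝ) (M u : ℕ → ℝ)

/-! In the grid numbering, row `k + 1` of the scheme couples `g_{k+1}` to its folded neighbours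
`ĝ_k` and `ĝ_{k+2}`; the three weights below are `A_{k+1,k+1}`, `-A_{k+1,k}` and `-A_{k+1,k+2}`. -/

noncomputable def diagWeight (k : ℕ) : ℝ :=
  M (k + 1) + Δt * D * (M k + 2 * M (k + 1) + M (k + 2)) / (2 * h ^ 2)

noncomputable def leftWeight (k : ℕ) : ℝ := Δt * (D * (M k + M (k + 1)) - h * u k) / (2 * h ^ 2)

noncomputable def rightWeight (k : ℕ) : ℝ :=
  Δt * (D * (M (k + 1) + M (k + 2)) + h * u (k + 2)) / (2 * h ^ 2)

variable {h Δt D M u}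

theorem scheme_row_eq (hh : h ≠ 0) (k : ℕ) (gl g gr : ℝ) :
    M (k + 1) * g + Δt * (u k * gl - u (k + 2) * gr) / (2 * h)
      + Δt * D * (-(M k + M (k + 1)) * gl + (M k + 2 * M (k + 1) + M (k + 2)) * g
        - (M (k + 1) + M (k + 2)) * gr) / (2 * h ^ 2)
      = diagWeight h Δt D M k * g - leftWeight h Δt D M u k * gl
        - rightWeight h Δt D M u k * gr := by
  simp only [diagWeight, leftWeight, rightWeight]
  field_simp
  ring

theorem diagWeight_sub_leftWeight_sub_rightWeight (hh : h ≠ 0) (k : ℕ) :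
    diagWeight h Δt D M k - leftWeight h Δt D M u k - rightWeight h Δt D M u k
      = M (k + 1) + Δt * (u k - u (k + 2)) / (2 * h) := by
  simp only [diagWeight, leftWeight, rightWeight]
  field_simp
  ring

theorem mul_abs_le_of_mesh_condition {N : ℕ} (hN : 2 ≤ N) (hD : 0 ≤ D)
    (hM0 : M 0 = M 2) (hMN1 : M (N + 1) = M (N - 1))
    (hu0 : u 0 = -u 2) (huN1 : u (N + 1) = -u (N - 1))
    (cond1 : ∀ j, 1 ≤ j → j ≤ N → h * |u j| ≤ D * min (M (j - 1)) (min (M j) (M (j + 1)))) :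
    ∀ j ≤ N + 1, h * |u j| ≤ D * M j := by
  have hinner : ∀ j, 1 ≤ j → j ≤ N → h * |u j| ≤ D * M j := fun j hj1 hjN =>
    (cond1 j hj1 hjN).trans
      (mul_le_mul_of_nonneg_left ((min_le_right _ _).trans (min_le_left _ _)) hD)
  intro j hj
  rcases Nat.eq_zero_or_pos j with rfl | hj0
  · rw [hu0, hM0, abs_neg]
    exact hinner 2 one_le_two hN
  rcases hj.lt_or_eq with hjN | rfl
  · exact hinner j hj0 (by omega)
  · rw [huN1, hMN1, abs_neg]
    exact hinner (N - 1) (by omega) (by omega)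

theorem leftWeight_nonneg (hh : 0 < h) (hΔt : 0 ≤ Δt) (hD : 0 ≤ D) {k : ℕ} (hM : 0 ≤ M (k + 1))
    (hmesh : h * |u k| ≤ D * M k) : 0 ≤ leftWeight h Δt D M u k := by
  refine div_nonneg (mul_nonneg hΔt (sub_nonneg.2 ?_)) (by positivity)
  calc h * u k ≤ h * |u k| := mul_le_mul_of_nonneg_left (le_abs_self _) hh.le
    _ ≤ D * M k := hmesh
    _ ≤ D * (M k + M (k + 1)) := mul_le_mul_of_nonneg_left (le_add_of_nonneg_right hM) hD

theorem rightWeight_nonneg (hh : 0 < h) (hΔt : 0 ≤ Δt) (hD : 0 ≤ D) {k : ℕ} (hM : 0 ≤ M (k + 1))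
    (hmesh : h * |u (k + 2)| ≤ D * M (k + 2)) : 0 ≤ rightWeight h Δt D M u k := by
  refine div_nonneg (mul_nonneg hΔt (neg_le_iff_add_nonneg.1 ?_)) (by positivity)
  calc -(h * u (k + 2)) = h * -u (k + 2) := neg_mul_eq_mul_neg _ _
    _ ≤ h * |u (k + 2)| := mul_le_mul_of_nonneg_left (neg_le_abs _) hh.le
    _ ≤ D * M (k + 2) := hmesh
    _ ≤ D * (M (k + 1) + M (k + 2)) := mul_le_mul_of_nonneg_left (le_add_of_nonneg_left hM) hD

end Scheme

theorem stmt_6_general (N : ℕ) (hN : 3 ≤ N) (h Δt D : ℝ)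
    (hh : 0 < h) (hΔt : 0 < Δt) (hD : 0 < D)
    (M u : ℕ → ℝ)
    (hMpos : ∀ j, 1 ≤ j → j ≤ N → 0 < M j)
    (hM0 : M 0 = M 2) (hMN1 : M (N + 1) = M (N - 1))
    (hu0 : u 0 = -u 2) (huN1 : u (N + 1) = -u (N - 1))
    (A : Matrix (Fin N) (Fin N) ℝ)
    (hA : ∀ g : Fin N → ℝ, ∀ i : Fin N,
      A.mulVec g i =
        M (i.1 + 1) * g i
        + Δt * (u i.1 * g (foldIdx1D N hN i.1)
            - u (i.1 + 2) * g (foldIdx1D N hN (i.1 + 2))) / (2 * h)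
        + Δt * D * (-(M i.1 + M (i.1 + 1)) * g (foldIdx1D N hN i.1)
            + (M i.1 + 2 * M (i.1 + 1) + M (i.1 + 2)) * g i
            - (M (i.1 + 1) + M (i.1 + 2)) * g (foldIdx1D N hN (i.1 + 2))) / (2 * h ^ 2))
    (cond1 : ∀ j, 1 ≤ j → j ≤ N →
      h * |u j| ≤ D * min (M (j - 1)) (min (M j) (M (j + 1))))
    (cond2 : ∀ i, 1 ≤ i → i ≤ N →
      0 < M i + Δt * (u (i - 1) - u (i + 1)) / (2 * h)) :
    (∀ i j, i ≠ j → A i j ≤ 0) ∧ IsUnit A ∧ ∀ i j, 0 ≤ A⁻¹ i j := by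
  have hmesh := mul_abs_le_of_mesh_condition (by omega) hD.le hM0 hMN1 hu0 huN1 cond1
  have hstencil : ∀ (i : Fin N) g, (A *ᵥ g) i = diagWeight h Δt D M i * g i
      - leftWeight h Δt D M u i * g (foldIdx1D N hN i)
      - rightWeight h Δt D M u i * g (foldIdx1D N hN (i + 2)) := fun i g =>
    (hA g i).trans (scheme_row_eq hh.ne' _ _ _ _)
  have hoff : ∀ i j, i ≠ j → A i j ≤ 0 := fun i j hij =>
    offDiag_nonpos_of_mulVec_apply_eq A
      (leftWeight_nonneg hh hΔt.le hD.le (hMpos _ (by omega) (by omega)).le (hmesh _ (by omega)))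
      (rightWeight_nonneg hh hΔt.le hD.le (hMpos _ (by omega) (by omega)).le (hmesh _ (by omega)))
      (hstencil i) hij
  have hrow : ∀ i, 0 < (A *ᵥ fun _ => 1) i := fun i => by
    simp only [hstencil, mul_one]
    rw [diagWeight_sub_leftWeight_sub_rightWeight hh.ne']
    simpa using cond2 (i + 1) (by omega) (by omega)
  exact ⟨hoff, isUnit_of_offDiag_nonpos_of_rowSum_pos hoff hrow,
    inv_nonneg_of_offDiag_nonpos_of_rowSum_pos hoff hrow⟩

/-- **Monotonicity of the second order scheme in one dimension.** Under the mesh constraint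
`h |u_j| ≤ D min{M_{j−1}, M_j, M_{j+1}}` and the time step constraint
`M_i + Δt (u_{i−1} − u_{i+1})/(2h) > 0` (with the ghost conventions
`M₀ = M₂`, `M_{N+1} = M_{N−1}`, `u₀ = −u₂`, `u_{N+1} = −u_{N−1}` and `u₁ = u_N = 0`),
the coefficient matrix `A` of the backward Euler second order finite difference scheme,
defined by `(Ag)_i = M_i g_i + Δt (u_{i−1}ĝ_{i−1} − u_{i+1}ĝ_{i+1})/(2h)
+ Δt D [−(M_{i−1}+M_i)ĝ_{i−1} + (M_{i−1}+2M_i+M_{i+1})g_i − (M_i+M_{i+1})ĝ_{i+1}]/(2h²)`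
(grid index of `i : Fin N` being `i+1 ∈ {1,…,N}`), is a nonsingular M-matrix: it has
nonpositive off-diagonal entries, is invertible, and `A⁻¹` is entrywise nonnegative. -/
theorem stmt_6 (N : ℕ) (hN : 3 ≤ N) (h Δt D : ℝ)
    (hh : 0 < h) (hΔt : 0 < Δt) (hD : 0 < D)
    (M u : ℕ → ℝ)
    (hMpos : ∀ j, 1 ≤ j → j ≤ N → 0 < M j)
    (hu1 : u 1 = 0) (huN : u N = 0)
    (hM0 : M 0 = M 2) (hMN1 : M (N + 1) = M (N - 1))
    (hu0 : u 0 = -u 2) (huN1 : u (N + 1) = -u (N - 1))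
    (A : Matrix (Fin N) (Fin N) ℝ)
    (hA : ∀ g : Fin N → ℝ, ∀ i : Fin N,
      A.mulVec g i =
        M (i.1 + 1) * g i
        + Δt * (u i.1 * g (foldIdx1D N hN i.1)
            - u (i.1 + 2) * g (foldIdx1D N hN (i.1 + 2))) / (2 * h)
        + Δt * D * (-(M i.1 + M (i.1 + 1)) * g (foldIdx1D N hN i.1)
            + (M i.1 + 2 * M (i.1 + 1) + M (i.1 + 2)) * g i
            - (M (i.1 + 1) + M (i.1 + 2)) * g (foldIdx1D N hN (i.1 + 2))) / (2 * h ^ 2))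
    (cond1 : ∀ j, 1 ≤ j → j ≤ N →
      h * |u j| ≤ D * min (M (j - 1)) (min (M j) (M (j + 1))))
    (cond2 : ∀ i, 1 ≤ i → i ≤ N →
      0 < M i + Δt * (u (i - 1) - u (i + 1)) / (2 * h)) :
    (∀ i j, i ≠ j → A i j ≤ 0) ∧ IsUnit A ∧ ∀ i j, 0 ≤ A⁻¹ i j :=
  stmt_6_general N hN h Δt D hh hΔt hD M u hMpos hM0 hMN1 hu0 huN1 A hA cond1 cond2
end

section
/- Semi-discrete energy dissipation: Let Ω = ∏_{i=1}^d [a_i, b_i] ⊂ ℝ^d be a closed box, let D > 0 and Δt > 0, let 𝓜 : Ω → ℝ be continuous with 𝓜 > 0 on Ω, and let u : ℝ^d → ℝ^d be a continuously differentiable vector field with ∇·u = 0 on Ω and u·n = 0 on ∂Ω. Let g, g' : ℝ^d → ℝ be continuously differentiable functions satisfying the one-step variational identity tested with g': ∫_Ω 𝓜 (g')² dx + Δt·D·∫_Ω 𝓜 |∇g'|² dx + Δt·∫_Ω g' (u·∇g') dx = ∫_Ω 𝓜 g g' dx. Then (1/Δt)·(∫_Ω 𝓜 (g')² dx − ∫_Ω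 𝓜 g² dx) ≤ −2D·∫_Ω 𝓜 |∇g'|² dx. Writing ρ = 𝓜 g and ρ' = 𝓜 g', this states that the backward Euler step dissipates the Pearson χ²-type energy: (1/Δt)(∫_Ω (ρ')²/𝓜 − ∫_Ω ρ²/𝓜) ≤ −2D ∫_Ω 𝓜 |∇(ρ'/𝓜)|². -/
open MeasureTheory Set

/-! The convection term `∫ g' (u·∇g')` equals `½ ∫ ∇·(u g'²)`, since `∇·u = 0`, and the
flux `u g'²` vanishes on the faces of the box, so it integrates to zero. Tested with `g'`, the
backward Euler step then reads `∫ 𝓜 g'² + Δt D ∫ 𝓜 |∇g'|² = ∫ 𝓜 g g'`, and the weighted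
Young inequality `2 ∫ 𝓜 g g' ≤ ∫ 𝓜 g² + ∫ 𝓜 g'²` turns this into the dissipation bound. -/

theorem integral_sum_fderiv_eq_zero_of_eq_zero_on_faces {d : ℕ} (a b : Fin d → ℝ)
    (F : Fin d → (Fin d → ℝ) → ℝ) (hF : ∀ i, ContDiff ℝ 1 (F i))
    (hface : ∀ i, ∀ x ∈ Icc a b, (x i = a i ∨ x i = b i) → F i x = 0) :
    ∫ x in Icc a b, ∑ i, fderiv ℝ (F i) x (Pi.single i 1) = 0 := by
  rcases d with _ | n
  · simp
  by_cases hle : a ≤ b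
  swap
  · simp [Icc_eq_empty hle]
  have hderiv_cont : ∀ i, Continuous fun x => fderiv ℝ (F i) x (Pi.single i 1) := fun i =>
    ((hF i).continuous_fderiv one_ne_zero).clm_apply continuous_const
  rw [integral_divergence_of_hasFDerivAt_off_countable' a b hle F (fun i x => fderiv ℝ (F i) x) ∅
    countable_empty (fun i => (hF i).continuous.continuousOn)
    (fun x _ i => ((hF i).differentiable one_ne_zero x).hasFDerivAt)
    ((continuous_finsetSum _ fun i _ => hderiv_cont i).continuousOn.integrableOn_compact
      isCompact_Icc)]
  refine Finset.sum_eq_zero fun i _ => ?_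
  have hvanish : ∀ c, (c = a i ∨ c = b i) →
      ∀ y ∈ Icc (a ∘ i.succAbove) (b ∘ i.succAbove), F i (i.insertNth c y) = 0 := by
    rintro c hc y hy
    refine hface i _ (Fin.insertNth_mem_Icc.2 ⟨?_, hy⟩) (by simpa using hc)
    rcases hc with rfl | rfl
    exacts [⟨le_rfl, hle i⟩, ⟨hle i, le_rfl⟩]
  rw [setIntegral_congr_fun measurableSet_Icc (hvanish _ (Or.inr rfl)),
    setIntegral_congr_fun measurableSet_Icc (hvanish _ (Or.inl rfl))]
  simp

theorem fderiv_mul_sq_apply {E : Type*} [NormedAddCommGroup E] [NormedSpace ℝ E]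
    {v φ : E → ℝ} {x : E} (hv : DifferentiableAt ℝ v x) (hφ : DifferentiableAt ℝ φ x) (e : E) :
    fderiv ℝ (fun y => v y * φ y ^ 2) x e
      = 2 * (φ x * (v x * fderiv ℝ φ x e)) + φ x ^ 2 * fderiv ℝ v x e := by
  rw [fderiv_fun_mul hv (hφ.fun_pow 2), fderiv_fun_pow 2 hφ]
  simp only [add_apply, smul_apply, smul_eq_mul]
  ring

theorem integral_mul_sum_mul_fderiv_eq_zero {d : ℕ} (a b : Fin d → ℝ)
    (u : (Fin d → ℝ) → (Fin d → ℝ)) (hu : ContDiff ℝ 1 u)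
    (hdiv : ∀ x ∈ Icc a b, ∑ i, fderiv ℝ (fun y => u y i) x (Pi.single i 1) = 0)
    (htang : ∀ i, ∀ x ∈ Icc a b, (x i = a i ∨ x i = b i) → u x i = 0)
    (φ : (Fin d → ℝ) → ℝ) (hφ : ContDiff ℝ 1 φ) :
    ∫ x in Icc a b, φ x * ∑ i, u x i * fderiv ℝ φ x (Pi.single i 1) = 0 := by
  have hui : ∀ i, ContDiff ℝ 1 fun y => u y i := contDiff_pi.1 hu
  have hflux := integral_sum_fderiv_eq_zero_of_eq_zero_on_faces a b
    (fun i y => u y i * φ y ^ 2) (fun i => (hui i).mul (hφ.pow 2))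
    (fun i x hx hxi => by simp [htang i x hx hxi])
  have hdiv_flux : ∀ x ∈ Icc a b,
      ∑ i, fderiv ℝ (fun y => u y i * φ y ^ 2) x (Pi.single i 1)
        = 2 * (φ x * ∑ i, u x i * fderiv ℝ φ x (Pi.single i 1)) := by
    intro x hx
    simp only [fderiv_mul_sq_apply ((hui _).differentiable one_ne_zero x)
      (hφ.differentiable one_ne_zero x), Finset.sum_add_distrib, ← Finset.mul_sum, hdiv x hx]
    ring
  rw [setIntegral_congr_fun measurableSet_Icc hdiv_flux, integral_const_mul] at hflux
  simpa using hflux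

theorem two_mul_integral_mul_mul_le {α : Type*} [MeasurableSpace α] {μ : Measure α}
    {w f g : α → ℝ} (hw : ∀ᵐ x ∂μ, 0 ≤ w x) (hf : Integrable (fun x => w x * f x ^ 2) μ)
    (hg : Integrable (fun x => w x * g x ^ 2) μ) (hfg : Integrable (fun x => w x * f x * g x) μ) :
    2 * ∫ x, w x * f x * g x ∂μ ≤ (∫ x, w x * f x ^ 2 ∂μ) + ∫ x, w x * g x ^ 2 ∂μ := by
  rw [← integral_const_mul, ← integral_add hf hg]
  refine integral_mono_ae (hfg.const_mul 2) (hf.add hg) ?_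
  filter_upwards [hw] with x hwx
  nlinarith [mul_nonneg hwx (sq_nonneg (f x - g x))]

theorem stmt_14_general (d : ℕ) (a b : Fin d → ℝ)
    (D Δt : ℝ) (hΔt : 0 < Δt)
    (𝓜 : (Fin d → ℝ) → ℝ)
    (h𝓜c : ContinuousOn 𝓜 (Set.Icc a b))
    (h𝓜pos : ∀ x ∈ Set.Icc a b, 0 < 𝓜 x)
    (u : (Fin d → ℝ) → (Fin d → ℝ)) (hu : ContDiff ℝ 1 u)
    (hdiv : ∀ x ∈ Set.Icc a b,
      ∑ i, fderiv ℝ (fun y => u y i) x (Pi.single i 1) = 0)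
    (htang : ∀ i : Fin d, ∀ x ∈ Set.Icc a b, (x i = a i ∨ x i = b i) → u x i = 0)
    (g g' : (Fin d → ℝ) → ℝ) (hg : ContDiff ℝ 1 g) (hg' : ContDiff ℝ 1 g')
    (hstep : (∫ x in Set.Icc a b, 𝓜 x * (g' x) ^ 2)
        + Δt * D * (∫ x in Set.Icc a b,
            𝓜 x * ∑ i, (fderiv ℝ g' x (Pi.single i 1)) ^ 2)
        + Δt * (∫ x in Set.Icc a b,
            g' x * ∑ i, u x i * fderiv ℝ g' x (Pi.single i 1))
        = ∫ x in Set.Icc a b, 𝓜 x * g x * g' x) :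
    (1 / Δt) * ((∫ x in Set.Icc a b, 𝓜 x * (g' x) ^ 2)
        - ∫ x in Set.Icc a b, 𝓜 x * (g x) ^ 2)
      ≤ -(2 * D) * ∫ x in Set.Icc a b,
          𝓜 x * ∑ i, (fderiv ℝ g' x (Pi.single i 1)) ^ 2 := by
  rw [integral_mul_sum_mul_fderiv_eq_zero a b u hu hdiv htang g' hg', mul_zero, add_zero]
    at hstep
  have integrableOn_Icc {f : (Fin d → ℝ) → ℝ} (hf : ContinuousOn f (Icc a b)) :
      IntegrableOn f (Icc a b) := hf.integrableOn_compact isCompact_Icc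
  have hg_cont := hg.continuous.continuousOn (s := Icc a b)
  have hg'_cont := hg'.continuous.continuousOn (s := Icc a b)
  have hyoung := two_mul_integral_mul_mul_le (ae_restrict_of_forall_mem measurableSet_Icc
      fun x hx => (h𝓜pos x hx).le)
    (integrableOn_Icc (h𝓜c.mul (hg_cont.pow 2))) (integrableOn_Icc (h𝓜c.mul (hg'_cont.pow 2)))
    (integrableOn_Icc ((h𝓜c.mul hg_cont).mul hg'_cont))
  rw [one_div_mul_eq_div, div_le_iff₀ hΔt]
  linarith

/-- **Semi-discrete energy dissipation.** Let `Ω = ∏_i [a_i, b_i] ⊂ ℝ^d`, `D, Δt > 0`,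
`𝓜` continuous and positive on `Ω`, and `u` a `C¹` vector field with `∇·u = 0` on `Ω` and
`u·n = 0` on `∂Ω`. If `g, g'` are `C¹` and satisfy the backward Euler variational identity
tested with `g'`:
`∫ 𝓜 g'² + Δt·D·∫ 𝓜 |∇g'|² + Δt·∫ g' (u·∇g') = ∫ 𝓜 g g'`,
then `(1/Δt)(∫ 𝓜 g'² − ∫ 𝓜 g²) ≤ −2D ∫ 𝓜 |∇g'|²` (the Pearson χ²-type energy dissipates). -/
theorem stmt_14 (d : ℕ) (a b : Fin d → ℝ)
    (D Δt : ℝ) (hD : 0 < D) (hΔt : 0 < Δt)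
    (𝓜 : (Fin d → ℝ) → ℝ)
    (h𝓜c : ContinuousOn 𝓜 (Set.Icc a b))
    (h𝓜pos : ∀ x ∈ Set.Icc a b, 0 < 𝓜 x)
    (u : (Fin d → ℝ) → (Fin d → ℝ)) (hu : ContDiff ℝ 1 u)
    (hdiv : ∀ x ∈ Set.Icc a b,
      ∑ i, fderiv ℝ (fun y => u y i) x (Pi.single i 1) = 0)
    (htang : ∀ i : Fin d, ∀ x ∈ Set.Icc a b, (x i = a i ∨ x i = b i) → u x i = 0)
    (g g' : (Fin d → ℝ) → ℝ) (hg : ContDiff ℝ 1 g) (hg' : ContDiff ℝ 1 g')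
    (hstep : (∫ x in Set.Icc a b, 𝓜 x * (g' x) ^ 2)
        + Δt * D * (∫ x in Set.Icc a b,
            𝓜 x * ∑ i, (fderiv ℝ g' x (Pi.single i 1)) ^ 2)
        + Δt * (∫ x in Set.Icc a b,
            g' x * ∑ i, u x i * fderiv ℝ g' x (Pi.single i 1))
        = ∫ x in Set.Icc a b, 𝓜 x * g x * g' x) :
    (1 / Δt) * ((∫ x in Set.Icc a b, 𝓜 x * (g' x) ^ 2)
        - ∫ x in Set.Icc a b, 𝓜 x * (g x) ^ 2)
      ≤ -(2 * D) * ∫ x in Set.Icc a b,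
          𝓜 x * ∑ i, (fderiv ℝ g' x (Pi.single i 1)) ^ 2 :=
  stmt_14_general d a b D Δt hΔt 𝓜 h𝓜c h𝓜pos u hu hdiv htang g g' hg hg' hstep
end

section
/- 𝓜-symmetric decomposition identity: Let d ≥ 1, let D > 0 be a constant, let Ω ⊆ ℝ^d be open, let ρ, 𝓜 : Ω → ℝ be twice continuously differentiable with 𝓜 > 0 on Ω, and let b : Ω → ℝ^d be continuously differentiable. Define u = D∇𝓜 − 𝓜 b. If ∇·(b𝓜 − D∇𝓜) = 0 on Ω (i.e., u is divergence free), then at every point of Ω: ∇·(D∇ρ − bρ) = ∇·(D 𝓜 ∇(ρ/𝓜)) + u·∇(ρ/𝓜). In other words, the irreversible Fokker–Planck operator decomposes into the 𝓜-weighted diffusion (gradient-flow) part and the transport (Hamiltonian) part u·∇(ρ/𝓜) with divergence-free u. -/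
/-!
Writing `ρ = 𝓜 g` with `g = ρ/𝓜`, the flux splits pointwise as `D∇ρ − bρ = D𝓜∇g + g u`.
Taking divergences, the product rule gives `∇·(D𝓜∇g) + g ∇·u + u·∇g`, and stationarity of `𝓜`
says exactly that `∇·u = 0`.
-/

open BigOperators

/-- The `i`-th partial derivative of `f : ℝ^d → ℝ` at `x`. -/
noncomputable def pd {d : ℕ} (f : (Fin d → ℝ) → ℝ) (x : Fin d → ℝ) (i : Fin d) : ℝ :=
  fderiv ℝ f x (Pi.single i 1)

open Filter Topology

variable {d : ℕ}

noncomputable def divergence (F : (Fin d → ℝ) → Fin d → ℝ) (x : Fin d → ℝ) : ℝ :=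
  ∑ i, pd (fun y => F y i) x i

section PartialDerivative

variable {f g : (Fin d → ℝ) → ℝ} {x : Fin d → ℝ} {i : Fin d}

lemma pd_congr_of_eventuallyEq (h : f =ᶠ[𝓝 x] g) : pd f x i = pd g x i := by
  rw [pd, pd, h.fderiv_eq]

lemma pd_add (hf : DifferentiableAt ℝ f x) (hg : DifferentiableAt ℝ g x) :
    pd (fun y => f y + g y) x i = pd f x i + pd g x i := by
  simp [pd, fderiv_fun_add hf hg]

lemma pd_neg : pd (fun y => -f y) x i = -pd f x i := by
  simp [pd, fderiv_fun_neg]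

lemma pd_mul (hf : DifferentiableAt ℝ f x) (hg : DifferentiableAt ℝ g x) :
    pd (fun y => f y * g y) x i = f x * pd g x i + g x * pd f x i := by
  simp [pd, fderiv_fun_mul hf hg]

lemma ContDiffAt.differentiableAt_pd (hf : ContDiffAt ℝ 2 f x) :
    DifferentiableAt ℝ (fun y => pd f y i) x :=
  ((hf.fderiv_right (m := 1) le_rfl).clm_apply contDiffAt_const).differentiableAt one_ne_zero

lemma pd_eq_mul_pd_div (hf : DifferentiableAt ℝ f x) (hg : DifferentiableAt ℝ g x)
    (hgx : g x ≠ 0) :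
    pd f x i = g x * pd (fun z => f z / g z) x i + f x / g x * pd g x i := by
  have hf_eq : f =ᶠ[𝓝 x] fun z => g z * (f z / g z) := by
    filter_upwards [hg.continuousAt.eventually_ne hgx] with z hz
    rw [mul_div_cancel₀ _ hz]
  rw [pd_congr_of_eventuallyEq hf_eq, pd_mul hg (by fun_prop (disch := assumption))]

end PartialDerivative

section Divergence

variable {F G u : (Fin d → ℝ) → Fin d → ℝ} {g : (Fin d → ℝ) → ℝ} {x : Fin d → ℝ}

lemma divergence_congr_of_eventuallyEq (h : F =ᶠ[𝓝 x] G) :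
    divergence F x = divergence G x :=
  Finset.sum_congr rfl fun i _ =>
    pd_congr_of_eventuallyEq (h.mono fun _ hy => congrFun hy i)

lemma divergence_neg : divergence (fun y i => -F y i) x = -divergence F x := by
  simp only [divergence, pd_neg, Finset.sum_neg_distrib]

lemma divergence_add_mul (hF : ∀ i, DifferentiableAt ℝ (fun y => F y i) x)
    (hg : DifferentiableAt ℝ g x) (hu : ∀ i, DifferentiableAt ℝ (fun y => u y i) x) :
    divergence (fun y i => F y i + g y * u y i) x
      = divergence F x + g x * divergence u x + ∑ i, u x i * pd g x i := by
  have hcomp : ∀ i, pd (fun y => F y i + g y * u y i) x i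
      = pd (fun y => F y i) x i + g x * pd (fun y => u y i) x i + u x i * pd g x i := by
    intro i
    rw [pd_add (hF i) (hg.fun_mul (hu i)), pd_mul hg (hu i), add_assoc]
  simp only [divergence, hcomp, Finset.sum_add_distrib, Finset.mul_sum]

end Divergence

lemma flux_eq_weighted_grad_add {ρ 𝓜 : (Fin d → ℝ) → ℝ} {x : Fin d → ℝ} (i : Fin d) (D β : ℝ)
    (hρ : DifferentiableAt ℝ ρ x) (h𝓜 : DifferentiableAt ℝ 𝓜 x) (h𝓜x : 𝓜 x ≠ 0) :
    D * pd ρ x i - β * ρ x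
      = D * 𝓜 x * pd (fun z => ρ z / 𝓜 z) x i
        + ρ x / 𝓜 x * (D * pd 𝓜 x i - 𝓜 x * β) := by
  rw [pd_eq_mul_pd_div hρ h𝓜 h𝓜x]
  field_simp
  ring

theorem stmt_15_general (d : ℕ) (D : ℝ)
    (Ω : Set (Fin d → ℝ)) (hΩ : IsOpen Ω)
    (ρ 𝓜 : (Fin d → ℝ) → ℝ) (b : (Fin d → ℝ) → (Fin d → ℝ))
    (hρ : ContDiffOn ℝ 2 ρ Ω) (h𝓜 : ContDiffOn ℝ 2 𝓜 Ω)
    (hb : ContDiffOn ℝ 1 b Ω)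
    (h𝓜pos : ∀ x ∈ Ω, 0 < 𝓜 x)
    (hstat : ∀ x ∈ Ω,
      ∑ i, pd (fun y => b y i * 𝓜 y - D * pd 𝓜 y i) x i = 0) :
    ∀ x ∈ Ω,
      ∑ i, pd (fun y => D * pd ρ y i - b y i * ρ y) x i
        = (∑ i, pd (fun y => D * 𝓜 y * pd (fun z => ρ z / 𝓜 z) y i) x i)
          + ∑ i, (D * pd 𝓜 x i - 𝓜 x * b x i) * pd (fun z => ρ z / 𝓜 z) x i := by
  intro x hx
  set g := fun z => ρ z / 𝓜 z
  set u : (Fin d → ℝ) → Fin d → ℝ := fun y i => D * pd 𝓜 y i - 𝓜 y * b y i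
  have hΩx : Ω ∈ 𝓝 x := hΩ.mem_nhds hx
  have h𝓜x : ContDiffAt ℝ 2 𝓜 x := h𝓜.contDiffAt hΩx
  have hgx : ContDiffAt ℝ 2 g x := (hρ.div h𝓜 fun y hy => (h𝓜pos y hy).ne').contDiffAt hΩx
  have hflux : (fun y i => D * pd ρ y i - b y i * ρ y)
      =ᶠ[𝓝 x] fun y i => D * 𝓜 y * pd g y i + g y * u y i := by
    filter_upwards [hΩx] with y hy
    funext i
    have hΩy : Ω ∈ 𝓝 y := hΩ.mem_nhds hy
    exact flux_eq_weighted_grad_add i D (b y i)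
      ((hρ.differentiableOn two_ne_zero).differentiableAt hΩy)
      ((h𝓜.differentiableOn two_ne_zero).differentiableAt hΩy) (h𝓜pos y hy).ne'
  have hdiv_u : divergence u x = 0 := by
    have hu : u = fun y i => -(b y i * 𝓜 y - D * pd 𝓜 y i) := by
      funext y i; simp only [u]; ring
    rw [hu, divergence_neg, divergence, hstat x hx, neg_zero]
  have hb_i : ∀ i, DifferentiableAt ℝ (fun y => b y i) x := fun i =>
    differentiableAt_pi.mp ((hb.contDiffAt hΩx).differentiableAt one_ne_zero) i
  have hu_diff : ∀ i, DifferentiableAt ℝ (fun y => u y i) x := fun i =>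
    (h𝓜x.differentiableAt_pd.const_mul D).sub
      ((h𝓜x.differentiableAt two_ne_zero).mul (hb_i i))
  have hF_diff : ∀ i, DifferentiableAt ℝ (fun y => D * 𝓜 y * pd g y i) x := fun i =>
    ((h𝓜x.differentiableAt two_ne_zero).const_mul D).fun_mul hgx.differentiableAt_pd
  calc divergence (fun y i => D * pd ρ y i - b y i * ρ y) x
      = divergence (fun y i => D * 𝓜 y * pd g y i + g y * u y i) x :=
        divergence_congr_of_eventuallyEq hflux
    _ = divergence (fun y i => D * 𝓜 y * pd g y i) x + ∑ i, u x i * pd g x i := by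
        rw [divergence_add_mul hF_diff (hgx.differentiableAt two_ne_zero) hu_diff, hdiv_u,
          mul_zero, add_zero]

/-- **𝓜-symmetric decomposition identity.** Let `d ≥ 1`, `D > 0`, `Ω ⊆ ℝ^d` open, `ρ, 𝓜` be
`C²` on `Ω` with `𝓜 > 0`, and `b` a `C¹` vector field on `Ω`. Define `u = D∇𝓜 − 𝓜 b`.
If `∇·(b𝓜 − D∇𝓜) = 0` on `Ω` (so `u` is divergence free), then at every point of `Ω`:
`∇·(D∇ρ − bρ) = ∇·(D 𝓜 ∇(ρ/𝓜)) + u·∇(ρ/𝓜)`. -/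
theorem stmt_15 (d : ℕ) (hd : 1 ≤ d) (D : ℝ) (hD : 0 < D)
    (Ω : Set (Fin d → ℝ)) (hΩ : IsOpen Ω)
    (ρ 𝓜 : (Fin d → ℝ) → ℝ) (b : (Fin d → ℝ) → (Fin d → ℝ))
    (hρ : ContDiffOn ℝ 2 ρ Ω) (h𝓜 : ContDiffOn ℝ 2 𝓜 Ω)
    (hb : ContDiffOn ℝ 1 b Ω)
    (h𝓜pos : ∀ x ∈ Ω, 0 < 𝓜 x)
    (hstat : ∀ x ∈ Ω,
      ∑ i, pd (fun y => b y i * 𝓜 y - D * pd 𝓜 y i) x i = 0) :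
    ∀ x ∈ Ω,
      ∑ i, pd (fun y => D * pd ρ y i - b y i * ρ y) x i
        = (∑ i, pd (fun y => D * 𝓜 y * pd (fun z => ρ z / 𝓜 z) y i) x i)
          + ∑ i, (D * pd 𝓜 x i - 𝓜 x * b x i) * pd (fun z => ρ z / 𝓜 z) x i :=
  stmt_15_general d D Ω hΩ ρ 𝓜 b hρ h𝓜 hb h𝓜pos hstat
end
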